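/- Recursive decomposition of zero-rate QRM codewords: for -1 <= r <= r◇ < m and w = (w_1, w_2) in RM(r◇, m) with w_1, w_2 in RM(r◇, m-1), the state |w>^{(0)}_{r,m} = (1/sqrt(|RM(r,m)|)) sum_{c in RM(r,m)} |w + c> equals (1/sqrt(|B|)) sum_{u in B} |w_1 + u>^{(0)}_{r-1,m-1} tensor |w_2 + u>^{(0)}_{r-1,m-1}, where B is a set of coset representatives of RM(r, m-1) / RM(r-1, m-1). -/

import Mathlib

open scoped BigOperators

/-- The evaluation point `ρ(j) ∈ F₂^m`. -/
def rho (m : ℕ) (j : Fin (2^m)) : Fin m → ZMod 2 :=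
  fun i => if Nat.testBit (j : ℕ) (m - 1 - i.val) then 1 else 0

/-- The evaluation vector of a polynomial over all points of `F₂^m`. -/
noncomputable def evalVec (m : ℕ) (f : MvPolynomial (Fin m) (ZMod 2)) :
    Fin (2^m) → ZMod 2 :=
  fun j => MvPolynomial.eval (rho m j) f

/-- The Reed-Muller code `RM(r, m)` with integer order (so `RM(-1, m) = 0`). -/
noncomputable def RMz (m : ℕ) (r : ℤ) : Submodule (ZMod 2) (Fin (2^m) → ZMod 2) :=
  Submodule.span (ZMod 2)
    {v | ∃ f : MvPolynomial (Fin m) (ZMod 2), (f.totalDegree : ℤ) ≤ r ∧ evalVec m f = v}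

open Classical in
/-- The uniform superposition `(1/√|C|) ∑_{c ∈ C} |w + c⟩` over the coset `w + C`. -/
noncomputable def cosetKet {n : ℕ} (C : Submodule (ZMod 2) (Fin n → ZMod 2))
    (w : Fin n → ZMod 2) : (Fin n → ZMod 2) → ℂ :=
  fun b => if b + w ∈ C then ((1 / Real.sqrt (Nat.card C) : ℝ) : ℂ) else 0

/-- The first half (first `2^m` coordinates) of a length-`2^{m+1}` vector. -/
def lowHalf (m : ℕ) (b : Fin (2^(m+1)) → ZMod 2) : Fin (2^m) → ZMod 2 :=
  fun i => b ⟨i, by have hi := i.isLt; have h : 2^(m+1) = 2^m * 2 := pow_succ 2 m; omega⟩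

/-- The second half (last `2^m` coordinates) of a length-`2^{m+1}` vector. -/
def highHalf (m : ℕ) (b : Fin (2^(m+1)) → ZMod 2) : Fin (2^m) → ZMod 2 :=
  fun i => b ⟨2^m + i, by
    have hi := i.isLt; have h : 2^(m+1) = 2^m * 2 := pow_succ 2 m; omega⟩


/-!
Write the `2^(m+1)` coordinates of a word as two halves, the points with `x₀ = 0` followed by
those with `x₀ = 1`. Splitting a polynomial as `g(x₁, …) + x₀ h(x₁, …)` gives Plotkin's
`(u | u + v)` description: `b ∈ RM(r, m+1)` iff its first half `x` lies in `RM(r, m)` and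
`x + y ∈ RM(r-1, m)`, `y` the second half. Hence `|RM(r, m+1)| = |RM(r, m)| |RM(r-1, m)|
= |B| |RM(r-1, m)|²`, which matches the normalisations. For fixed `b`, the representative `u`
contributes to the sum iff both halves of `b + w` lie in `u + RM(r-1, m)`; this happens for
exactly one `u ∈ B` when `b + w ∈ RM(r, m+1)`, and for none otherwise.
-/

open MvPolynomial

section Transversal

variable {V : Type*} [AddCommGroup V] [Module (ZMod 2) V] {C C' : Submodule (ZMod 2) V}
  {B : Finset V}

theorem card_eq_card_mul_card_of_transversal (hle : C' ≤ C) (hB₁ : ∀ u ∈ B, u ∈ C)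
    (hB₂ : ∀ v ∈ C, ∃! u, u ∈ B ∧ v + u ∈ C') :
    Nat.card C = B.card * Nat.card C' := by
  let f : B × C' → C := fun p => ⟨p.1 + p.2, add_mem (hB₁ _ p.1.2) (hle p.2.2)⟩
  have hf : Function.Bijective f := by
    constructor
    · rintro ⟨⟨u, hu⟩, ⟨c, hc⟩⟩ ⟨⟨u', hu'⟩, ⟨c', hc'⟩⟩ h
      have hsum : u + c = u' + c' := congrArg Subtype.val h
      obtain ⟨u₀, -, huniq⟩ := hB₂ _ (add_mem (hB₁ u hu) (hle hc))
      have hu₀ : u = u₀ := huniq u ⟨hu, by rwa [add_comm u, add_assoc, ZModModule.add_self,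
        add_zero]⟩
      have hu₀' : u' = u₀ := huniq u' ⟨hu', by rwa [hsum, add_comm u', add_assoc,
        ZModModule.add_self, add_zero]⟩
      obtain rfl : u = u' := hu₀.trans hu₀'.symm
      obtain rfl : c = c' := add_left_cancel hsum
      rfl
    · rintro ⟨v, hv⟩
      obtain ⟨u, ⟨hu, hvu⟩, -⟩ := hB₂ v hv
      refine ⟨⟨⟨u, hu⟩, ⟨v + u, hvu⟩⟩, Subtype.ext ?_⟩
      change u + (v + u) = v
      rw [add_comm v, ← add_assoc, ZModModule.add_self, zero_add]
  rw [← Nat.card_eq_of_bijective f hf, Nat.card_prod, Nat.card_eq_finsetCard]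

open Classical in
theorem sum_ite_of_transversal {M : Type*} [AddCommMonoid M] (hle : C' ≤ C)
    (hB₁ : ∀ u ∈ B, u ∈ C) (hB₂ : ∀ v ∈ C, ∃! u, u ∈ B ∧ v + u ∈ C') (a : M)
    (x y : V) :
    ∑ u ∈ B, (if x + u ∈ C' ∧ y + u ∈ C' then a else 0) =
      if x ∈ C ∧ x + y ∈ C' then a else 0 := by
  split_ifs with h
  · obtain ⟨u₀, ⟨hu₀, hxu₀⟩, huniq⟩ := hB₂ x h.1
    have hyu₀ : y + u₀ ∈ C' := by
      simpa only [add_comm x y, ZModModule.add_add_add_cancel] using add_mem h.2 hxu₀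
    rw [Finset.sum_eq_single_of_mem u₀ hu₀ fun u hu hne => if_neg fun hxu => hne
      (huniq u ⟨hu, hxu.1⟩), if_pos ⟨hxu₀, hyu₀⟩]
  · refine Finset.sum_eq_zero fun u hu => if_neg ?_
    rintro ⟨hxu, hyu⟩
    refine h ⟨?_, ?_⟩
    · simpa [add_assoc, ZModModule.add_self] using add_mem (hle hxu) (hB₁ u hu)
    · simpa [ZModModule.add_add_add_cancel, add_comm y] using add_mem hxu hyu

end Transversal

section PlotkinSum

variable {R V : Type*} [Ring R] [AddCommGroup V] [Module R V]

/-- Plotkin's `(u | u + v)` code when `2 = 0` in `R`; in general its words are `(u, v - u)`. -/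
def plotkinSum (C C' : Submodule R V) : Submodule R (V × V) :=
  C.comap (LinearMap.fst R V V) ⊓ C'.comap (LinearMap.fst R V V + LinearMap.snd R V V)

variable {C C' : Submodule R V}

theorem mem_plotkinSum {p : V × V} : p ∈ plotkinSum C C' ↔ p.1 ∈ C ∧ p.1 + p.2 ∈ C' :=
  Iff.rfl

def plotkinSumEquiv (C C' : Submodule R V) : plotkinSum C C' ≃ C × C' where
  toFun p := (⟨p.1.1, (mem_plotkinSum.1 p.2).1⟩, ⟨p.1.1 + p.1.2, (mem_plotkinSum.1 p.2).2⟩)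
  invFun q := ⟨(q.1, q.2 - q.1), mem_plotkinSum.2 ⟨q.1.2, by simp⟩⟩
  left_inv p := by ext <;> simp
  right_inv q := by ext <;> simp

theorem card_plotkinSum (C C' : Submodule R V) :
    Nat.card (plotkinSum C C') = Nat.card C * Nat.card C' := by
  rw [Nat.card_congr (plotkinSumEquiv C C'), Nat.card_prod]

end PlotkinSum

section Halves

variable {m : ℕ}

def halvesEquiv (m : ℕ) :
    (Fin (2^(m+1)) → ZMod 2) ≃ₗ[ZMod 2] (Fin (2^m) → ZMod 2) × (Fin (2^m) → ZMod 2) :=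
  (LinearEquiv.funCongrLeft (ZMod 2) (ZMod 2)
      (finSumFinEquiv.trans (finCongr (Nat.two_pow_succ m).symm))).trans
    (LinearEquiv.sumArrowLequivProdArrow _ _ _ _)

theorem halvesEquiv_apply (b : Fin (2^(m+1)) → ZMod 2) :
    halvesEquiv m b = (lowHalf m b, highHalf m b) :=
  rfl

theorem lowHalf_add (b b' : Fin (2^(m+1)) → ZMod 2) :
    lowHalf m (b + b') = lowHalf m b + lowHalf m b' :=
  rfl

theorem highHalf_add (b b' : Fin (2^(m+1)) → ZMod 2) :
    highHalf m (b + b') = highHalf m b + highHalf m b' :=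
  rfl

theorem lowHalf_evalVec (f : MvPolynomial (Fin (m+1)) (ZMod 2)) (j : Fin (2^m)) :
    lowHalf m (evalVec (m+1) f) j = eval (Fin.cons 0 (rho m j)) f := by
  refine congrArg (eval · f) (funext fun i => Fin.cases ?_ (fun i => ?_) i)
  · simp [rho, Nat.testBit_lt_two_pow j.isLt]
  · simp [rho, show m - (i.val + 1) = m - 1 - i.val by omega]

theorem highHalf_evalVec (f : MvPolynomial (Fin (m+1)) (ZMod 2)) (j : Fin (2^m)) :
    highHalf m (evalVec (m+1) f) j = eval (Fin.cons 1 (rho m j)) f := by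
  refine congrArg (eval · f) (funext fun i => Fin.cases ?_ (fun i => ?_) i)
  · simp [rho, Nat.testBit_two_pow_add_eq, Nat.testBit_lt_two_pow j.isLt]
  · simp [rho, show m - (i.val + 1) = m - 1 - i.val by omega,
      Nat.testBit_two_pow_add_gt (show m - 1 - i.val < m by omega)]

end Halves

section ReedMuller

variable {m : ℕ}

theorem evalVec_mem_RMz {r : ℤ} {f : MvPolynomial (Fin m) (ZMod 2)}
    (hf : (f.totalDegree : ℤ) ≤ r) : evalVec m f ∈ RMz m r :=
  Submodule.subset_span ⟨f, hf, rfl⟩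

theorem RMz_mono : Monotone (RMz m) := fun _ _ h =>
  Submodule.span_mono fun _ ⟨f, hf, hv⟩ => ⟨f, hf.trans h, hv⟩

theorem evalVec_sum {ι : Type*} (s : Finset ι) (f : ι → MvPolynomial (Fin m) (ZMod 2)) :
    evalVec m (∑ i ∈ s, f i) = ∑ i ∈ s, evalVec m (f i) := by
  funext j
  simp only [evalVec, map_sum, Finset.sum_apply]

theorem eval_cons_monomial (a : ZMod 2) (x : Fin m → ZMod 2) (d : Fin (m+1) →₀ ℕ)
    (c : ZMod 2) :
    eval (Fin.cons a x) (monomial d c) = a ^ d 0 * eval x (monomial d.tail c) := by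
  simp only [eval_monomial, Finsupp.prod_fintype _ _ (fun _ => pow_zero _), Fin.prod_univ_succ,
    Fin.cons_zero, Fin.cons_succ, Finsupp.tail_apply]
  ring

theorem sum_tail_add_apply_zero (d : Fin (m+1) →₀ ℕ) :
    (d.tail.sum fun _ ↦ id) + d 0 = d.sum fun _ ↦ id := by
  rw [Finsupp.sum_fintype d.tail (fun _ ↦ id) (fun _ ↦ rfl),
    Finsupp.sum_fintype d (fun _ ↦ id) (fun _ ↦ rfl), Fin.sum_univ_succ, add_comm]
  rfl

theorem halvesEquiv_evalVec_monomial (d : Fin (m+1) →₀ ℕ) (c : ZMod 2) :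
    halvesEquiv m (evalVec (m+1) (monomial d c)) =
      (if d 0 = 0 then evalVec m (monomial d.tail c) else 0, evalVec m (monomial d.tail c)) := by
  rw [halvesEquiv_apply, Prod.mk.injEq]
  constructor <;> funext j
  · rw [lowHalf_evalVec, eval_cons_monomial]
    split_ifs with h <;> simp [h, evalVec]
  · rw [highHalf_evalVec, eval_cons_monomial, one_pow, one_mul]
    rfl

theorem halvesEquiv_evalVec_rename (g : MvPolynomial (Fin m) (ZMod 2)) :
    halvesEquiv m (evalVec (m+1) (rename Fin.succ g)) = (evalVec m g, evalVec m g) := by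
  rw [halvesEquiv_apply, Prod.mk.injEq]
  constructor <;> funext j
  · rw [lowHalf_evalVec, eval_rename]
    rfl
  · rw [highHalf_evalVec, eval_rename]
    rfl

theorem halvesEquiv_evalVec_X_zero_mul_rename (g : MvPolynomial (Fin m) (ZMod 2)) :
    halvesEquiv m (evalVec (m+1) (X 0 * rename Fin.succ g)) = (0, evalVec m g) := by
  rw [halvesEquiv_apply, Prod.mk.injEq]
  constructor <;> funext j
  · rw [lowHalf_evalVec, eval_mul, eval_X, Fin.cons_zero, zero_mul]
    rfl
  · rw [highHalf_evalVec, eval_mul, eval_X, Fin.cons_zero, one_mul, eval_rename]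
    rfl

theorem halvesEquiv_evalVec_monomial_mem_plotkinSum {r : ℤ} (d : Fin (m+1) →₀ ℕ)
    (c : ZMod 2) (hd : ((d.sum fun _ ↦ id : ℕ) : ℤ) ≤ r) :
    halvesEquiv m (evalVec (m+1) (monomial d c)) ∈ plotkinSum (RMz m r) (RMz m (r-1)) := by
  have htail : ((monomial d.tail c).totalDegree : ℤ) + d 0 ≤ r := by
    have := totalDegree_monomial_le d.tail c
    have := sum_tail_add_apply_zero d
    omega
  rw [halvesEquiv_evalVec_monomial, mem_plotkinSum]
  split_ifs with h0
  · rw [ZModModule.add_self]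
    exact ⟨evalVec_mem_RMz (by omega), zero_mem _⟩
  · rw [zero_add]
    exact ⟨zero_mem _, evalVec_mem_RMz (by omega)⟩

theorem RMz_succ_le (r : ℤ) :
    RMz (m+1) r ≤ (plotkinSum (RMz m r) (RMz m (r-1))).comap (halvesEquiv m).toLinearMap := by
  refine Submodule.span_le.2 ?_
  rintro _ ⟨f, hf, rfl⟩
  rw [SetLike.mem_coe, Submodule.mem_comap, f.as_sum, evalVec_sum, map_sum]
  refine Submodule.sum_mem _ fun d hd => halvesEquiv_evalVec_monomial_mem_plotkinSum d _ ?_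
  exact le_trans (by exact_mod_cast le_totalDegree hd) hf

theorem symm_halvesEquiv_mk_self_mem {r : ℤ} {x : Fin (2^m) → ZMod 2} (hx : x ∈ RMz m r) :
    (halvesEquiv m).symm (x, x) ∈ RMz (m+1) r := by
  have : RMz m r ≤ (RMz (m+1) r).comap
      ((halvesEquiv m).symm.toLinearMap ∘ₗ LinearMap.id.prod LinearMap.id) := by
    refine Submodule.span_le.2 ?_
    rintro _ ⟨g, hg, rfl⟩
    have hdeg : ((rename Fin.succ g).totalDegree : ℤ) ≤ r :=
      le_trans (by exact_mod_cast totalDegree_rename_le _ _) hg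
    simpa [← halvesEquiv_evalVec_rename] using evalVec_mem_RMz hdeg
  exact this hx

theorem symm_halvesEquiv_zero_mk_mem {r : ℤ} {y : Fin (2^m) → ZMod 2}
    (hy : y ∈ RMz m (r-1)) : (halvesEquiv m).symm (0, y) ∈ RMz (m+1) r := by
  have : RMz m (r-1) ≤ (RMz (m+1) r).comap
      ((halvesEquiv m).symm.toLinearMap ∘ₗ LinearMap.inr (ZMod 2) _ _) := by
    refine Submodule.span_le.2 ?_
    rintro _ ⟨g, hg, rfl⟩
    have hdeg : ((X 0 * rename Fin.succ g).totalDegree : ℤ) ≤ r := by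
      have := (totalDegree_mul (X 0) (rename Fin.succ g)).trans
        (add_le_add (totalDegree_X 0).le (totalDegree_rename_le Fin.succ g))
      omega
    simpa [← halvesEquiv_evalVec_X_zero_mul_rename] using evalVec_mem_RMz hdeg
  exact this hy

theorem RMz_succ (r : ℤ) :
    RMz (m+1) r = (plotkinSum (RMz m r) (RMz m (r-1))).comap (halvesEquiv m).toLinearMap := by
  refine le_antisymm (RMz_succ_le r) fun b hb => ?_
  obtain ⟨hx, hxy⟩ := mem_plotkinSum.1 hb
  have hsplit : halvesEquiv m b = (lowHalf m b, lowHalf m b) +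
      (0, lowHalf m b + highHalf m b) := by
    rw [halvesEquiv_apply, Prod.mk_add_mk, add_zero, ← add_assoc, ZModModule.add_self, zero_add]
  rw [← (halvesEquiv m).symm_apply_apply b, hsplit, map_add]
  exact add_mem (symm_halvesEquiv_mk_self_mem hx) (symm_halvesEquiv_zero_mk_mem hxy)

theorem mem_RMz_succ_iff {r : ℤ} {b : Fin (2^(m+1)) → ZMod 2} :
    b ∈ RMz (m+1) r ↔
      lowHalf m b ∈ RMz m r ∧ lowHalf m b + highHalf m b ∈ RMz m (r-1) := by
  rw [RMz_succ]
  rfl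

theorem card_RMz_succ (r : ℤ) :
    Nat.card (RMz (m+1) r) = Nat.card (RMz m r) * Nat.card (RMz m (r-1)) := by
  rw [RMz_succ, Submodule.comap_equiv_eq_map_symm,
    ← Nat.card_congr ((halvesEquiv m).symm.submoduleMap _).toEquiv, card_plotkinSum]

end ReedMuller

theorem one_div_sqrt_card_RMz_succ {m : ℕ} {r : ℤ} {B : Finset (Fin (2^m) → ZMod 2)}
    (hB₁ : ∀ u ∈ B, u ∈ RMz m r)
    (hB₂ : ∀ v ∈ RMz m r, ∃! u, u ∈ B ∧ v + u ∈ RMz m (r - 1)) :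
    1 / √(Nat.card (RMz (m+1) r) : ℝ) =
      1 / √(B.card : ℝ) * (1 / √(Nat.card (RMz m (r-1)) : ℝ)) *
        (1 / √(Nat.card (RMz m (r-1)) : ℝ)) := by
  rw [card_RMz_succ, card_eq_card_mul_card_of_transversal (RMz_mono (by omega)) hB₁ hB₂,
    Nat.cast_mul, Nat.cast_mul, Real.sqrt_mul (by positivity), Real.sqrt_mul (by positivity)]
  simp only [one_div, mul_inv]

theorem zQRM_recursive_decomposition_general (m : ℕ) (r : ℤ)
    (w : Fin (2^(m+1)) → ZMod 2)
    (B : Finset (Fin (2^m) → ZMod 2))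
    (hB₁ : ∀ u ∈ B, u ∈ RMz m r)
    (hB₂ : ∀ v ∈ RMz m r, ∃! u, u ∈ B ∧ v + u ∈ RMz m (r - 1)) :
    cosetKet (RMz (m+1) r) w = fun b =>
      ((1 / Real.sqrt B.card : ℝ) : ℂ) *
        ∑ u ∈ B,
          cosetKet (RMz m (r - 1)) (lowHalf m w + u) (lowHalf m b) *
            cosetKet (RMz m (r - 1)) (highHalf m w + u) (highHalf m b) := by
  classical
  funext b
  simp only [cosetKet, ite_zero_mul_ite_zero, ← add_assoc, ← lowHalf_add, ← highHalf_add]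
  rw [sum_ite_of_transversal (RMz_mono (by omega)) hB₁ hB₂, mul_ite, mul_zero,
    one_div_sqrt_card_RMz_succ hB₁ hB₂]
  refine if_congr mem_RMz_succ_iff ?_ rfl
  push_cast
  ring

/-- Recursive decomposition of zero-rate QRM codewords: for
`-1 ≤ r ≤ r◇ < m+1` and `w = (w₁, w₂) ∈ RM(r◇, m+1)`, the state
`|w⟩⁽⁰⁾_{r,m+1}` (uniform superposition over `w + RM(r, m+1)`) equals
`(1/√|B|) ∑_{u ∈ B} |w₁+u⟩⁽⁰⁾_{r-1,m} ⊗ |w₂+u⟩⁽⁰⁾_{r-1,m}`, for any set `B` of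
coset representatives of `RM(r, m) / RM(r-1, m)`. -/
theorem zQRM_recursive_decomposition (m : ℕ) (r rd : ℤ)
    (h₁ : -1 ≤ r) (h₂ : r ≤ rd) (h₃ : rd < (m : ℤ) + 1)
    (w : Fin (2^(m+1)) → ZMod 2) (hw : w ∈ RMz (m+1) rd)
    (B : Finset (Fin (2^m) → ZMod 2))
    (hB₁ : ∀ u ∈ B, u ∈ RMz m r)
    (hB₂ : ∀ v ∈ RMz m r, ∃! u, u ∈ B ∧ v + u ∈ RMz m (r - 1)) :
    cosetKet (RMz (m+1) r) w = fun b =>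
      ((1 / Real.sqrt B.card : ℝ) : ℂ) *
        ∑ u ∈ B,
          cosetKet (RMz m (r - 1)) (lowHalf m w + u) (lowHalf m b) *
            cosetKet (RMz m (r - 1)) (highHalf m w + u) (highHalf m b) :=
  zQRM_recursive_decomposition_general m r w B hB₁ hB₂
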